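/- arXiv:0902.0197 — 5 statements merged into one kernel-verified Lean document; each statement's English description precedes it below -/
import Mathlib

section
/- Let V be the Z/2 vector space with basis the set {-1,1}^k of sign vectors, and define the linear map ∂ on basis elements by ∂(ε_1,...,ε_k) = Σ_{i=1}^k (ε_1,...,-ε_i,...,ε_k) + (-ε_1,...,-ε_k). Then ∂ ∘ ∂ = 0 if and only if k is odd. -/
open Finset

abbrev SV (k : ℕ) := Fin k → Bool
abbrev CFR (R : Type) [CommRing R] (k : ℕ) := SV k → R
abbrev CF (k : ℕ) := CFR (ZMod 2) k

def sflip {k : ℕ} (i : Fin k) (ε : SV k) : SV k := Function.update ε i (!ε i)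
def flipAll {k : ℕ} (ε : SV k) : SV k := fun j => !ε j

def bdryR (R : Type) [CommRing R] (k : ℕ) : CFR R k →ₗ[R] CFR R k where
  toFun x := fun ε => (∑ i : Fin k, x (sflip i ε)) + x (flipAll ε)
  map_add' x y := by funext ε; simp only [Pi.add_apply, Finset.sum_add_distrib]; ring
  map_smul' c x := by
    funext ε
    show (∑ i, (c • x) (sflip i ε)) + (c • x) (flipAll ε)
        = c * ((∑ i, x (sflip i ε)) + x (flipAll ε))
    simp only [Pi.smul_apply, smul_eq_mul]
    rw [mul_add, Finset.mul_sum]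

abbrev bdry (k : ℕ) : CF k →ₗ[ZMod 2] CF k := bdryR (ZMod 2) k

def eta (k : ℕ) : CF k →ₗ[ZMod 2] CF k where
  toFun x := fun ε => x (flipAll ε)
  map_add' x y := by funext ε; simp
  map_smul' c x := by funext ε; simp

def pre (k : ℕ) (a b : Bool) : CF k →ₗ[ZMod 2] CF (k+2) where
  toFun x := fun ε => if ε 0 = a ∧ ε 1 = b then x (fun i => ε i.succ.succ) else 0
  map_add' x y := by funext ε; by_cases h : ε 0 = a ∧ ε 1 = b <;> simp [h]
  map_smul' c x := by funext ε; by_cases h : ε 0 = a ∧ ε 1 = b <;> simp [h]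

def proj (k : ℕ) : CF (k+2) →ₗ[ZMod 2] CF k where
  toFun x := fun δ => ∑ a : Bool, ∑ b : Bool, x (Fin.cons a (Fin.cons b δ))
  map_add' x y := by funext δ; simp [Finset.sum_add_distrib]
  map_smul' c x := by funext δ; simp [Finset.mul_sum]; ring


lemma sflip_sflip {k : ℕ} (i : Fin k) (ε : SV k) : sflip i (sflip i ε) = ε := by
  funext j
  by_cases h : j = i <;> simp [sflip, Function.update_apply, h]

lemma sflip_comm {k : ℕ} (i j : Fin k) (ε : SV k) :
    sflip j (sflip i ε) = sflip i (sflip j ε) := by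
  by_cases hij : i = j
  · subst hij; rfl
  · funext l
    by_cases hi : l = i <;> by_cases hj : l = j <;>
      simp [sflip, Function.update_apply, hi, hj, hij, Ne.symm hij]

lemma flipAll_sflip {k : ℕ} (i : Fin k) (ε : SV k) :
    flipAll (sflip i ε) = sflip i (flipAll ε) := by
  funext j
  by_cases h : j = i <;> simp [flipAll, sflip, Function.update_apply, h]

lemma flipAll_flipAll {k : ℕ} (ε : SV k) : flipAll (flipAll ε) = ε := by
  funext j; simp [flipAll]

lemma bdry_apply (k : ℕ) (x : CF k) (ε : SV k) :
    bdry k x ε = (∑ i : Fin k, x (sflip i ε)) + x (flipAll ε) := rfl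

lemma key (k : ℕ) (x : CF k) (ε : SV k) :
    bdry k (bdry k x) ε = ((k : ZMod 2) + 1) * x ε := by
  simp only [bdry_apply]
  rw [Finset.sum_add_distrib]
  have h1 : ∑ i : Fin k, ∑ j : Fin k, x (sflip j (sflip i ε)) = (k : ZMod 2) * x ε := by
    rw [← Finset.sum_product', Finset.univ_product_univ]
    classical
    rw [← Finset.sum_filter_add_sum_filter_not Finset.univ
      (fun p : Fin k × Fin k => p.1 = p.2)]
    have hd : ∑ p ∈ Finset.univ.filter (fun p : Fin k × Fin k => p.1 = p.2),
        x (sflip p.2 (sflip p.1 ε)) = (k : ZMod 2) * x ε := by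
      rw [Finset.sum_filter, ← Finset.univ_product_univ, Finset.sum_product]
      simp only [Finset.sum_ite_eq, Finset.mem_univ, if_true]
      simp [sflip_sflip, Finset.card_univ, nsmul_eq_mul]
    have ho : ∑ p ∈ Finset.univ.filter (fun p : Fin k × Fin k => ¬ p.1 = p.2),
        x (sflip p.2 (sflip p.1 ε)) = 0 := by
      apply Finset.sum_involution (fun p _ => (p.2, p.1))
      · intro p _
        rw [sflip_comm]
        exact CharTwo.add_self_eq_zero _
      · intro p hp _
        simp only [Finset.mem_filter] at hp
        intro hcon
        exact hp.2 (congrArg Prod.snd hcon)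
      · intro p hp
        simp only [Finset.mem_filter, Finset.mem_univ, true_and] at hp ⊢
        exact fun h => hp h.symm
      · intro p _; rfl
    rw [hd, ho, add_zero]
  have h2 : ∑ i : Fin k, x (flipAll (sflip i ε)) = ∑ j : Fin k, x (sflip j (flipAll ε)) := by
    refine Finset.sum_congr rfl fun i _ => ?_
    rw [flipAll_sflip]
  rw [h1, h2, flipAll_flipAll, add_assoc, ← add_assoc (∑ j : Fin k, x (sflip j (flipAll ε))),
    CharTwo.add_self_eq_zero, zero_add, add_mul, one_mul]

theorem stmt0 (k : ℕ) (hk : 1 ≤ k) :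
    (bdry k).comp (bdry k) = 0 ↔ Odd k := by
  constructor
  · intro h
    by_contra hodd
    rw [Nat.not_odd_iff_even] at hodd
    have hcast : (k : ZMod 2) = 0 := by
      obtain ⟨m, rfl⟩ := hodd
      push_cast
      ring_nf
      simp [show ((2 : ZMod 2)) = 0 from rfl]
    set x : CF k := fun δ => if δ = (fun _ => true) then 1 else 0 with hx
    have := key k x (fun _ => true)
    rw [hcast, zero_add, one_mul] at this
    have h0 : bdry k (bdry k x) (fun _ => true) = 0 := by
      have := congrArg (fun f => f x (fun _ => true)) h
      simpa using this
    rw [h0, hx] at this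
    simp at this
  · intro hodd
    apply LinearMap.ext
    intro x
    funext ε
    have := key k x ε
    have hcast : (k : ZMod 2) = 1 := by
      obtain ⟨m, rfl⟩ := hodd
      push_cast
      ring_nf
      simp [show ((2 : ZMod 2)) = 0 from rfl]
    simp only [LinearMap.comp_apply, LinearMap.zero_apply]
    rw [this, hcast]
    ring_nf
    simp [show ((2 : ZMod 2)) = 0 from rfl]
end

section
/- Let k be odd and let ∂ be the Z/2-linear map on the free Z/2 vector space on {-1,1}^k sending (ε_1,...,ε_k) to Σ_i (ε_1,...,-ε_i,...,ε_k) + (-ε_1,...,-ε_k). If k = 2n-1, then dim_{Z/2}(ker ∂ / im ∂) = 2^n. -/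
open Finset

namespace HomAux

variable {k : ℕ}

lemma z2 (a : ZMod 2) : a + a = 0 := CharTwo.add_self_eq_zero a

lemma cf_add_self (x : CF k) : x + x = 0 := by
  funext ε; exact z2 (x ε)

lemma sflip_sflip (i : Fin k) (ε : SV k) : sflip i (sflip i ε) = ε := by
  unfold sflip
  rw [Function.update_self, Function.update_idem, Bool.not_not, Function.update_eq_self]

lemma sflip_comm (i j : Fin k) (ε : SV k) : sflip i (sflip j ε) = sflip j (sflip i ε) := by
  rcases eq_or_ne i j with rfl | h
  · rfl
  · unfold sflip
    rw [Function.update_of_ne h, Function.update_of_ne h.symm,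
      Function.update_comm h]

lemma flipAll_sflip (i : Fin k) (ε : SV k) : flipAll (sflip i ε) = sflip i (flipAll ε) := by
  funext j
  rcases eq_or_ne j i with rfl | h
  · simp [flipAll, sflip, Function.update_self]
  · simp [flipAll, sflip, Function.update_of_ne h]

lemma flipAll_flipAll (ε : SV k) : flipAll (flipAll ε) = ε := by
  funext j; simp [flipAll]

/-- sum-of-single-flips operator, as a plain function -/
def Sf (x : CF k) : CF k := fun δ => ∑ i, x (sflip i δ)
/-- antipodal operator, as a plain function -/
def ef (x : CF k) : CF k := fun δ => x (flipAll δ)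

lemma bdry_eq (x : CF k) : bdry k x = Sf x + ef x := rfl

lemma Sf_add (x y : CF k) : Sf (x + y) = Sf x + Sf y := by
  funext δ; simp [Sf, Finset.sum_add_distrib]

lemma ef_add (x y : CF k) : ef (x + y) = ef x + ef y := rfl

lemma ef_ef (x : CF k) : ef (ef x) = x := by
  funext δ; simp [ef, flipAll_flipAll]

lemma Sf_ef (x : CF k) : Sf (ef x) = ef (Sf x) := by
  funext δ; simp [Sf, ef, flipAll_sflip]

lemma Sf_Sf (hk : Odd k) (x : CF k) : Sf (Sf x) = x := by
  funext δ
  show (∑ i, ∑ j, x (sflip j (sflip i δ))) = x δ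
  rw [← Finset.sum_product']
  have hsplit : (univ : Finset (Fin k)).diag ∪ (univ : Finset (Fin k)).offDiag
      = univ ×ˢ univ := Finset.diag_union_offDiag _
  have hdisj : Disjoint (univ : Finset (Fin k)).diag (univ : Finset (Fin k)).offDiag :=
    Finset.disjoint_diag_offDiag _
  have h1 : ∑ p ∈ (univ : Finset (Fin k)).diag, x (sflip p.2 (sflip p.1 δ))
      + ∑ p ∈ (univ : Finset (Fin k)).offDiag, x (sflip p.2 (sflip p.1 δ))
      = ∑ p ∈ univ ×ˢ univ, x (sflip p.2 (sflip p.1 δ)) := by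
    rw [← Finset.sum_union hdisj, hsplit]
  have h2 : ∑ p ∈ (univ : Finset (Fin k)).offDiag, x (sflip p.2 (sflip p.1 δ)) = 0 := by
    apply Finset.sum_involution (fun p _ => Prod.swap p)
    · intro p _
      rw [sflip_comm]; exact z2 _
    · intro p hp _
      simp only [Finset.mem_offDiag] at hp
      intro hc
      exact hp.2.2 (by simpa using congrArg Prod.snd hc)
    · intro p hp
      simp only [Finset.mem_offDiag] at hp ⊢
      exact ⟨hp.2.1, hp.1, fun h => hp.2.2 h.symm⟩
    · intro p _; rfl
  have h3 : ∑ p ∈ (univ : Finset (Fin k)).diag, x (sflip p.2 (sflip p.1 δ)) = x δ := by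
    rw [Finset.sum_diag]
    have : ∀ i : Fin k, x (sflip i (sflip i δ)) = x δ := fun i => by rw [sflip_sflip]
    rw [Finset.sum_congr rfl (fun i _ => this i), Finset.sum_const, Finset.card_univ,
      Fintype.card_fin, nsmul_eq_mul]
    have hcast : (k : ZMod 2) = 1 := by
      have hk1 : k % 2 = 1 := Nat.odd_iff.mp hk
      have := ZMod.natCast_mod k 2
      rw [hk1] at this
      rw [← this]; norm_num
    rw [hcast, one_mul]
  rw [← h1, h2, h3, add_zero]

lemma bdry_bdry (hk : Odd k) (x : CF k) : bdry k (bdry k x) = 0 := by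
  rw [bdry_eq, bdry_eq, Sf_add, ef_add, Sf_Sf hk, Sf_ef, ef_ef]
  have : ef (Sf x) + (ef (Sf x) + x) = x := by
    rw [← add_assoc, cf_add_self, zero_add]
  calc x + ef (Sf x) + (ef (Sf x) + x)
      = x + (ef (Sf x) + (ef (Sf x) + x)) := by ring
    _ = x + x := by rw [this]
    _ = 0 := cf_add_self x

lemma ker_Sf_eq_ef {x : CF k} (hx : bdry k x = 0) : Sf x = ef x := by
  have h : Sf x + ef x = 0 := by rw [← bdry_eq, hx]
  calc Sf x = Sf x + ef x + ef x := by rw [add_assoc, cf_add_self, add_zero]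
    _ = 0 + ef x := by rw [h]
    _ = ef x := zero_add _

end HomAux

namespace HomAux

variable {k : ℕ}

def cns (a b : Bool) (δ : SV k) : SV (k+2) := Fin.cons a (Fin.cons b δ)

@[simp] lemma cns_zero (a b : Bool) (δ : SV k) : cns a b δ 0 = a := rfl

@[simp] lemma cns_one (a b : Bool) (δ : SV k) : cns a b δ 1 = b := by
  rw [cns, ← Fin.succ_zero_eq_one, Fin.cons_succ, Fin.cons_zero]

@[simp] lemma cns_succ_succ (a b : Bool) (δ : SV k) (i : Fin k) :
    cns a b δ i.succ.succ = δ i := by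
  rw [cns, Fin.cons_succ, Fin.cons_succ]

lemma cns_self (ε : SV (k+2)) : cns (ε 0) (ε 1) (fun i => ε i.succ.succ) = ε := by
  funext i
  refine Fin.cases rfl (fun j => ?_) i
  refine Fin.cases ?_ (fun j' => ?_) j
  · rw [cns, Fin.cons_succ, Fin.cons_zero, Fin.succ_zero_eq_one]
  · rw [cns, Fin.cons_succ, Fin.cons_succ]

lemma sflip_zero_cns (a b : Bool) (δ : SV k) : sflip 0 (cns a b δ) = cns (!a) b δ := by
  rw [sflip, cns_zero, cns, Fin.update_cons_zero]; rfl

lemma sflip_one_cns (a b : Bool) (δ : SV k) : sflip 1 (cns a b δ) = cns a (!b) δ := by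
  rw [sflip, cns_one, cns, ← Fin.succ_zero_eq_one, ← Fin.cons_update, Fin.update_cons_zero]; rfl

lemma sflip_ss_cns (a b : Bool) (δ : SV k) (i : Fin k) :
    sflip i.succ.succ (cns a b δ) = cns a b (sflip i δ) := by
  rw [sflip, cns_succ_succ, cns, ← Fin.cons_update, ← Fin.cons_update]; rfl

lemma flipAll_cns (a b : Bool) (δ : SV k) :
    flipAll (cns a b δ) = cns (!a) (!b) (flipAll δ) := by
  funext i
  refine Fin.cases ?_ (fun j => ?_) i
  · rfl
  · refine Fin.cases ?_ (fun j' => ?_) j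
    · show (!(cns a b δ (Fin.succ 0))) = cns (!a) (!b) (flipAll δ) (Fin.succ 0)
      rw [Fin.succ_zero_eq_one, cns_one, cns_one]
    · show (!(cns a b δ j'.succ.succ)) = cns (!a) (!b) (flipAll δ) j'.succ.succ
      rw [cns_succ_succ, cns_succ_succ]; rfl

def slc (x : CF (k+2)) (a b : Bool) : CF k := fun δ => x (cns a b δ)

lemma slc_add (x y : CF (k+2)) (a b : Bool) : slc (x + y) a b = slc x a b + slc y a b := rfl

lemma ext_slc {x y : CF (k+2)} (h : ∀ a b, slc x a b = slc y a b) : x = y := by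
  funext ε
  have hx : x ε = slc x (ε 0) (ε 1) (fun i => ε i.succ.succ) := by rw [slc, cns_self]
  have hy : y ε = slc y (ε 0) (ε 1) (fun i => ε i.succ.succ) := by rw [slc, cns_self]
  rw [hx, hy, h]

lemma slc_bdry (x : CF (k+2)) (a b : Bool) :
    slc (bdry (k+2) x) a b
      = slc x (!a) b + slc x a (!b) + Sf (slc x a b) + ef (slc x (!a) (!b)) := by
  funext δ
  show (∑ i : Fin (k+2), x (sflip i (cns a b δ))) + x (flipAll (cns a b δ)) = _
  rw [Fin.sum_univ_succ, Fin.sum_univ_succ, Fin.succ_zero_eq_one]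
  rw [sflip_zero_cns, sflip_one_cns, flipAll_cns]
  have hs : ∀ i : Fin k, x (sflip i.succ.succ (cns a b δ)) = x (cns a b (sflip i δ)) :=
    fun i => by rw [sflip_ss_cns]
  rw [Finset.sum_congr rfl (fun i _ => hs i)]
  show x (cns (!a) b δ) + (x (cns a (!b) δ) + ∑ i, x (cns a b (sflip i δ)))
      + x (cns (!a) (!b) (flipAll δ))
    = slc x (!a) b δ + slc x a (!b) δ + Sf (slc x a b) δ + ef (slc x (!a) (!b)) δ
  show _ = x (cns (!a) b δ) + x (cns a (!b) δ) + (∑ i, slc x a b (sflip i δ))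
      + slc x (!a) (!b) (flipAll δ)
  show x (cns (!a) b δ) + (x (cns a (!b) δ) + ∑ i, x (cns a b (sflip i δ)))
      + x (cns (!a) (!b) (flipAll δ))
    = x (cns (!a) b δ) + x (cns a (!b) δ) + (∑ i, x (cns a b (sflip i δ)))
      + x (cns (!a) (!b) (flipAll δ))
  ring

end HomAux

namespace HomAux

variable {k : ℕ}

/-- the section of the kernel of `bdry (k+2)` built from `p` free and `κ₁ κ₂` in the
kernel of `bdry k`: slices are `x₀₀ = p`, `x₀₁ = ef p + κ₁`, `x₁₀ = Sf p + κ₁ + ef κ₂`,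
`x₁₁ = p + κ₂`. -/
def Phi (p a b : CF k) : CF (k+2) := fun ε =>
  match ε 0, ε 1 with
  | false, false => p (fun i => ε i.succ.succ)
  | false, true  => (ef p + a) (fun i => ε i.succ.succ)
  | true,  false => (Sf p + a + ef b) (fun i => ε i.succ.succ)
  | true,  true  => (p + b) (fun i => ε i.succ.succ)

lemma tail_cns (a b : Bool) (δ : SV k) : (fun i : Fin k => cns a b δ i.succ.succ) = δ := by
  funext i; rw [cns_succ_succ]

@[simp] lemma slc_Phi_ff (p a b : CF k) : slc (Phi p a b) false false = p := by
  funext δ; show Phi p a b (cns false false δ) = p δ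
  rw [Phi]; rw [cns_zero, cns_one]; simp only [tail_cns]

@[simp] lemma slc_Phi_ft (p a b : CF k) : slc (Phi p a b) false true = ef p + a := by
  funext δ; show Phi p a b (cns false true δ) = _
  rw [Phi]; rw [cns_zero, cns_one]; simp only [tail_cns]

@[simp] lemma slc_Phi_tf (p a b : CF k) : slc (Phi p a b) true false = Sf p + a + ef b := by
  funext δ; show Phi p a b (cns true false δ) = _
  rw [Phi]; rw [cns_zero, cns_one]; simp only [tail_cns]

@[simp] lemma slc_Phi_tt (p a b : CF k) : slc (Phi p a b) true true = p + b := by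
  funext δ; show Phi p a b (cns true true δ) = _
  rw [Phi]; rw [cns_zero, cns_one]; simp only [tail_cns]

lemma cf_nsmul_two (u : CF k) : (2 : ℕ) • u = 0 := by
  rw [two_smul]; exact cf_add_self u

lemma cf_zsmul_two (u : CF k) : (2 : ℤ) • u = 0 := by
  rw [two_smul]; exact cf_add_self u

lemma cf_nsmul_four (u : CF k) : (4 : ℕ) • u = 0 := by
  rw [show (4:ℕ) = 2+2 from rfl, add_nsmul, cf_nsmul_two, add_zero]

lemma cf_zsmul_four (u : CF k) : (4 : ℤ) • u = 0 := by
  rw [show (4:ℤ) = 2+2 by norm_num, add_zsmul, cf_zsmul_two, add_zero]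

lemma Phi_mem_ker (hk : Odd k) (p : CF k) {a b : CF k}
    (ha : bdry k a = 0) (hb : bdry k b = 0) :
    bdry (k+2) (Phi p a b) = 0 := by
  have hSa : Sf a = ef a := ker_Sf_eq_ef ha
  have hSb : Sf b = ef b := ker_Sf_eq_ef hb
  apply ext_slc
  intro c d
  rw [show slc (0 : CF (k+2)) c d = 0 from rfl, slc_bdry]
  rcases c <;> rcases d <;>
    simp only [Bool.not_false, Bool.not_true, slc_Phi_ff, slc_Phi_ft, slc_Phi_tf, slc_Phi_tt,
      Sf_add, ef_add, Sf_ef, ef_ef, Sf_Sf hk, hSa, hSb]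
  all_goals abel_nf
  all_goals simp only [cf_nsmul_two, cf_zsmul_two, cf_nsmul_four, cf_zsmul_four, add_zero, zero_add]

end HomAux

namespace HomAux

variable {k : ℕ}

lemma h2 : (1 : CF k) + 1 = 0 := by funext ε; exact z2 1

lemma slc_eqs {x : CF (k+2)} (hx : bdry (k+2) x = 0) (a b : Bool) :
    slc x (!a) b + slc x a (!b) + Sf (slc x a b) + ef (slc x (!a) (!b)) = 0 := by
  rw [← slc_bdry, hx]; rfl

lemma ker_B2 {x : CF (k+2)} (hx : bdry (k+2) x = 0) :
    bdry k (slc x true true + slc x false false) = 0 := by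
  have Eff := slc_eqs hx false false
  have Ett := slc_eqs hx true true
  simp only [Bool.not_false, Bool.not_true] at Eff Ett
  rw [bdry_eq, Sf_add, ef_add]
  linear_combination Eff + Ett - (slc x true false + slc x false true) * h2

lemma ker_B1 {x : CF (k+2)} (hx : bdry (k+2) x = 0) :
    bdry k (slc x false true + ef (slc x false false)) = 0 := by
  have Eff := slc_eqs hx false false
  have Eft := slc_eqs hx false true
  simp only [Bool.not_false, Bool.not_true] at Eff Eft
  have eEff := congrArg ef Eff
  rw [ef_add, ef_add, ef_add, ef_ef, show ef (0 : CF k) = 0 from rfl] at eEff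
  rw [bdry_eq, Sf_add, ef_add, Sf_ef, ef_ef]
  linear_combination Eft + eEff - (slc x true true + ef (slc x true false)) * h2

lemma ker_C {x : CF (k+2)} (hx : bdry (k+2) x = 0) :
    Phi (slc x false false) (slc x false true + ef (slc x false false))
      (slc x true true + slc x false false) = x := by
  have Eff := slc_eqs hx false false
  simp only [Bool.not_false] at Eff
  apply ext_slc
  intro a b
  rcases a <;> rcases b <;>
    simp only [slc_Phi_ff, slc_Phi_ft, slc_Phi_tf, slc_Phi_tt, ef_add]
  · linear_combination (ef (slc x false false)) * h2
  · linear_combination Eff + (ef (slc x false false) - slc x true false) * h2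
  · linear_combination (slc x false false) * h2

lemma Sf_zero : Sf (0 : CF k) = 0 := by funext δ; simp [Sf]

lemma Phi_add (p a b p' a' b' : CF k) :
    Phi (p + p') (a + a') (b + b') = Phi p a b + Phi p' a' b' := by
  apply ext_slc
  intro c d
  rcases c <;> rcases d <;>
    simp only [slc_add, slc_Phi_ff, slc_Phi_ft, slc_Phi_tf, slc_Phi_tt, Sf_add, ef_add] <;>
    ring

lemma Phi_zero' : Phi (0 : CF k) 0 0 = 0 := by
  apply ext_slc
  intro c d
  rcases c <;> rcases d <;>
    simp only [slc_add, slc_Phi_ff, slc_Phi_ft, slc_Phi_tf, slc_Phi_tt, Sf_zero,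
      show ef (0 : CF k) = 0 from rfl, add_zero, zero_add] <;> rfl

lemma Phi_smul (c : ZMod 2) (p a b : CF k) :
    Phi (c • p) (c • a) (c • b) = c • Phi p a b := by
  have hc : c = 0 ∨ c = 1 := by revert c; decide
  rcases hc with rfl | rfl
  · simp only [zero_smul]; exact Phi_zero'
  · simp only [one_smul]



noncomputable def kerEquiv (hk : Odd k) :
    (CF k × (LinearMap.ker (bdry k) × LinearMap.ker (bdry k)))
      ≃ₗ[ZMod 2] LinearMap.ker (bdry (k+2)) where
  toFun t := ⟨Phi t.1 t.2.1.1 t.2.2.1,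
    LinearMap.mem_ker.mpr (Phi_mem_ker hk t.1 t.2.1.2 t.2.2.2)⟩
  map_add' t u := by
    apply Subtype.ext
    show Phi (t.1 + u.1) (t.2.1.1 + u.2.1.1) (t.2.2.1 + u.2.2.1) = _
    rw [Phi_add]; rfl
  map_smul' c t := by
    apply Subtype.ext
    show Phi (c • t.1) (c • t.2.1.1) (c • t.2.2.1) = c • Phi t.1 t.2.1.1 t.2.2.1
    exact Phi_smul c _ _ _
  invFun y := (slc y.1 false false,
    ⟨⟨slc y.1 false true + ef (slc y.1 false false), LinearMap.mem_ker.mpr (ker_B1 y.2)⟩,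
     ⟨slc y.1 true true + slc y.1 false false, LinearMap.mem_ker.mpr (ker_B2 y.2)⟩⟩)
  left_inv t := by
    have e1 : slc (Phi t.1 t.2.1.1 t.2.2.1) false false = t.1 := slc_Phi_ff _ _ _
    have e2 : slc (Phi t.1 t.2.1.1 t.2.2.1) false true
        + ef (slc (Phi t.1 t.2.1.1 t.2.2.1) false false) = t.2.1.1 := by
      rw [slc_Phi_ff, slc_Phi_ft]
      linear_combination (ef t.1) * h2
    have e3 : slc (Phi t.1 t.2.1.1 t.2.2.1) true true
        + slc (Phi t.1 t.2.1.1 t.2.2.1) false false = t.2.2.1 := by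
      rw [slc_Phi_ff, slc_Phi_tt]
      linear_combination t.1 * h2
    exact Prod.ext e1 (Prod.ext (Subtype.ext e2) (Subtype.ext e3))
  right_inv y := by
    apply Subtype.ext
    exact ker_C y.2

end HomAux

namespace HomAux

variable {k : ℕ}

lemma finrank_CF (k : ℕ) : Module.finrank (ZMod 2) (CF k) = 2 ^ k := by
  rw [Module.finrank_pi]
  simp [Fintype.card_fun]

lemma bdry_one : bdry 1 = 0 := by
  apply LinearMap.ext
  intro x
  funext ε
  show (∑ i : Fin 1, x (sflip i ε)) + x (flipAll ε) = 0
  rw [Fin.sum_univ_one]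
  have : sflip (0 : Fin 1) ε = flipAll ε := by
    funext j
    have hj : j = 0 := Subsingleton.elim _ _
    subst hj
    show Function.update ε 0 (!ε 0) 0 = !ε 0
    rw [Function.update_self]
  rw [this]
  exact z2 _

lemma finrank_ker_one : Module.finrank (ZMod 2) (LinearMap.ker (bdry 1)) = 2 := by
  rw [bdry_one, LinearMap.ker_zero]
  rw [finrank_top]
  exact finrank_CF 1

lemma finrank_ker_succ (hk : Odd k) :
    Module.finrank (ZMod 2) (LinearMap.ker (bdry (k+2)))
      = 2 ^ k + 2 * Module.finrank (ZMod 2) (LinearMap.ker (bdry k)) := by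
  rw [← LinearEquiv.finrank_eq (kerEquiv hk)]
  rw [Module.finrank_prod, Module.finrank_prod, finrank_CF]
  ring

lemma finrank_ker_odd : ∀ n k : ℕ, 1 ≤ n → k = 2 * n - 1 →
    Module.finrank (ZMod 2) (LinearMap.ker (bdry k)) = 2 ^ (k - 1) + 2 ^ (n - 1) := by
  intro n
  induction n with
  | zero => intro k h; omega
  | succ n ih =>
    intro k _ hk
    rcases Nat.eq_zero_or_pos n with rfl | hn
    · -- n + 1 = 1, k = 1
      have : k = 1 := by omega
      subst this
      simpa using finrank_ker_one
    · -- k = 2(n+1) - 1 = (2n - 1) + 2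
      set k' := 2 * n - 1 with hk'
      have hkk : k = k' + 2 := by omega
      have hodd : Odd k' := by
        refine ⟨n - 1, by omega⟩
      subst hkk
      rw [finrank_ker_succ hodd, ih k' hn rfl]
      have h1 : k' - 1 + 1 = k' := by omega
      have h2 : n - 1 + 1 = n := by omega
      have e1 : (2:ℕ) ^ k' = 2 * 2 ^ (k' - 1) := by
        conv_lhs => rw [← h1]
        rw [pow_succ]; ring
      have e2 : (2:ℕ) ^ n = 2 * 2 ^ (n - 1) := by
        conv_lhs => rw [← h2]
        rw [pow_succ]; ring
      have e3 : k' + 2 - 1 = k' + 1 := by omega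
      rw [e3, pow_succ]
      have e4 : n + 1 - 1 = n := by omega
      rw [e4, e1, e2]
      ring

lemma range_le_ker (hk : Odd k) : LinearMap.range (bdry k) ≤ LinearMap.ker (bdry k) := by
  rintro y ⟨x, rfl⟩
  exact LinearMap.mem_ker.mpr (bdry_bdry hk x)

end HomAux


noncomputable def homDim (k : ℕ) : ℕ :=
  Module.finrank (ZMod 2)
    (LinearMap.ker (bdry k) ⧸
      Submodule.comap (LinearMap.ker (bdry k)).subtype (LinearMap.range (bdry k)))

open HomAux in
theorem stmt1 (n k : ℕ) (hn : 1 ≤ n) (hk : k = 2 * n - 1) :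
    homDim k = 2 ^ n := by
  have hodd : Odd k := ⟨n - 1, by omega⟩
  have hker := finrank_ker_odd n k hn hk
  have hcomap : Module.finrank (ZMod 2)
      (Submodule.comap (LinearMap.ker (bdry k)).subtype (LinearMap.range (bdry k)))
      = Module.finrank (ZMod 2) (LinearMap.range (bdry k)) :=
    LinearEquiv.finrank_eq (Submodule.comapSubtypeEquivOfLe (range_le_ker hodd))
  have hq := Submodule.finrank_quotient_add_finrank
      (Submodule.comap (LinearMap.ker (bdry k)).subtype (LinearMap.range (bdry k)))
  have hrn := LinearMap.finrank_range_add_finrank_ker (bdry k)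
  rw [finrank_CF k] at hrn
  rw [hcomap] at hq
  unfold homDim
  have hk1 : 1 ≤ k := by omega
  have e1 : (2:ℕ) ^ k = 2 * 2 ^ (k - 1) := by
    conv_lhs => rw [show k = k - 1 + 1 by omega]
    rw [pow_succ]; ring
  have e2 : (2:ℕ) ^ n = 2 * 2 ^ (n - 1) := by
    conv_lhs => rw [show n = n - 1 + 1 by omega]
    rw [pow_succ]; ring
  omega
end

section
/- For the Z/2-linear operator ∂ on the free Z/2 vector space on {-1,1}^3 defined by ∂(ε_1,ε_2,ε_3) = (-ε_1,ε_2,ε_3)+(ε_1,-ε_2,ε_3)+(ε_1,ε_2,-ε_3)+(-ε_1,-ε_2,-ε_3), the image of ∂ has dimension 2 and the homology ker ∂ / im ∂ has dimension 4 over Z/2. -/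
open Finset

-- auxiliary

def par (ε : SV 3) : Bool := ε 0 ^^ (ε 1 ^^ ε 2)
noncomputable def S (b : Bool) (x : CF 3) : ZMod 2 := ∑ ε, if par ε = b then x ε else 0
def w (b : Bool) : CF 3 := fun δ => if par δ = b then 1 else 0

lemma sumSV (f : SV 3 → ZMod 2) :
    ∑ ε, f ε = ∑ a : Bool, ∑ b : Bool, ∑ c : Bool, f ![a,b,c] := by
  rw [← (Fin.consEquiv (fun _ : Fin 3 => Bool)).sum_comp, Fintype.sum_prod_type]
  congr 1; funext a
  rw [← (Fin.consEquiv (fun _ : Fin 2 => Bool)).sum_comp, Fintype.sum_prod_type]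
  congr 1; funext b
  rw [← (Fin.consEquiv (fun _ : Fin 1 => Bool)).sum_comp, Fintype.sum_prod_type]
  congr 1; funext c
  rw [Fintype.sum_unique]; rfl

lemma sflip0 (a b c : Bool) : sflip 0 ![a,b,c] = ![!a,b,c] := by
  funext i; fin_cases i <;> simp [sflip, Function.update]
lemma sflip1 (a b c : Bool) : sflip 1 ![a,b,c] = ![a,!b,c] := by
  funext i; fin_cases i <;> simp [sflip, Function.update]
lemma sflip2 (a b c : Bool) : sflip 2 ![a,b,c] = ![a,b,!c] := by
  funext i; fin_cases i <;> simp [sflip, Function.update]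
lemma flipAll3 (a b c : Bool) : flipAll ![a,b,c] = ![!a,!b,!c] := by
  funext i; fin_cases i <;> rfl

lemma keyA (x : CF 3) (δ : SV 3) : bdry 3 x δ = S (!par δ) x := by
  have hδ : δ = ![δ 0, δ 1, δ 2] := by funext i; fin_cases i <;> rfl
  rw [hδ]
  generalize δ 0 = a; generalize δ 1 = b; generalize δ 2 = c
  show (∑ i : Fin 3, x (sflip i ![a,b,c])) + x (flipAll ![a,b,c]) = _
  rw [Fin.sum_univ_three, sflip0, sflip1, sflip2, flipAll3, S, sumSV]
  cases a <;> cases b <;> cases c <;> norm_num [par, Matrix.cons_val_zero, Matrix.cons_val_one, Matrix.cons_val_two, Matrix.head_cons, Matrix.tail_cons] <;> ring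

lemma bdry_eq (x : CF 3) : bdry 3 x = S true x • w false + S false x • w true := by
  funext δ
  rw [keyA]
  cases hp : par δ <;> simp [w, hp]

def ind (v : SV 3) : CF 3 := fun ε => if ε = v then 1 else 0

lemma S_ind (b : Bool) (v : SV 3) : S b (ind v) = if par v = b then 1 else 0 := by
  rw [S]
  rw [Finset.sum_eq_single v]
  · simp [ind]
  · intro ε _ hne; simp [ind, hne]
  · simp
lemma w_mem (b : Bool) : w b ∈ LinearMap.range (bdry 3) := by
  refine ⟨ind (if b then ![false,false,false] else ![true,false,false]), ?_⟩
  funext δ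
  rw [keyA, S_ind]
  cases b <;> cases hp : par δ <;>
    simp [w, hp, show par ![false,false,false] = false from rfl,
      show par ![true,false,false] = true from rfl]

lemma range_eq : LinearMap.range (bdry 3)
    = Submodule.span (ZMod 2) (Set.range ![w false, w true]) := by
  apply le_antisymm
  · rintro y ⟨x, rfl⟩
    rw [bdry_eq]
    refine Submodule.add_mem _ (Submodule.smul_mem _ _ ?_) (Submodule.smul_mem _ _ ?_) <;>
      apply Submodule.subset_span
    · exact ⟨0, rfl⟩
    · exact ⟨1, rfl⟩
  · rw [Submodule.span_le]
    rintro y ⟨i, rfl⟩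
    fin_cases i <;> [exact w_mem false; exact w_mem true]

lemma li : LinearIndependent (ZMod 2) ![w false, w true] := by
  rw [LinearIndependent.pair_iff]
  intro s t h
  constructor
  · have := congrFun h ![false,false,false]
    simpa [w, par] using this
  · have := congrFun h ![true,false,false]
    simpa [w, par] using this

lemma rank_range : Module.finrank (ZMod 2) (LinearMap.range (bdry 3)) = 2 := by
  rw [range_eq, finrank_span_eq_card li]
  simp

lemma S_w (b b' : Bool) : S b (w b') = 0 := by
  rw [S, sumSV]
  cases b <;> cases b' <;> norm_num [par, w] <;> decide

lemma sq_zero (x : CF 3) : bdry 3 (bdry 3 x) = 0 := by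
  rw [bdry_eq x, map_add, map_smul, map_smul, bdry_eq (w false), bdry_eq (w true)]
  simp [S_w]

lemma range_le_ker : LinearMap.range (bdry 3) ≤ LinearMap.ker (bdry 3) := by
  rintro y ⟨x, rfl⟩
  exact sq_zero x

lemma rank_ker : Module.finrank (ZMod 2) (LinearMap.ker (bdry 3)) = 6 := by
  have h := LinearMap.finrank_range_add_finrank_ker (bdry 3)
  rw [rank_range] at h
  have h8 : Module.finrank (ZMod 2) (CF 3) = 8 := by
    rw [Module.finrank_fintype_fun_eq_card]; simp
  rw [h8] at h
  omega


theorem stmt2 :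
    Module.finrank (ZMod 2) (LinearMap.range (bdry 3)) = 2 ∧ homDim 3 = 4 := by
  refine ⟨rank_range, ?_⟩
  have e := Submodule.comapSubtypeEquivOfLe range_le_ker
  have hc : Module.finrank (ZMod 2)
      (Submodule.comap (LinearMap.ker (bdry 3)).subtype (LinearMap.range (bdry 3))) = 2 := by
    rw [e.finrank_eq, rank_range]
  have h := Submodule.finrank_quotient_add_finrank
    (Submodule.comap (LinearMap.ker (bdry 3)).subtype (LinearMap.range (bdry 3)))
  rw [hc, rank_ker] at h
  unfold homDim
  omega
end

section
/- Let n ≥ 1, k = 2n-1 odd. Every element x of π^{-1}(ker ∂_k) ⊆ CF(k+2) can be written uniquely as x = (1,1,u)+(-1,-1,u)+(-1,1,v)+(1,-1,v)+(1,1,w)+(-1,1,w)+(1,1,t) with u,v,w ∈ CF(k) and t ∈ ker ∂_k; equivalently, the set {(1,1,u)+(-1,-1,u) : u basis}, {(-1,1,v)+(1,-1,v) : v basis}, {(1,1,w)+(-1,1,w) : w basis}, {(1,1,t) : t in a basis of ker ∂_k} is a linearly independent spanning set of π^{-1}(ker ∂_k). -/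
open Finset

lemma pre_apply (k : ℕ) (a b : Bool) (y : CF k) (a' b' : Bool) (δ : SV k) :
    pre k a b y (Fin.cons a' (Fin.cons b' δ)) = if a' = a ∧ b' = b then y δ else 0 := by
  have h1 : (Fin.cons a' (Fin.cons b' δ) : SV (k+2)) 0 = a' := Fin.cons_zero _ _
  have h2 : (Fin.cons a' (Fin.cons b' δ) : SV (k+2)) 1 = b' := by
    rw [← Fin.succ_zero_eq_one, Fin.cons_succ, Fin.cons_zero]
  have h3 : (fun i : Fin k => (Fin.cons a' (Fin.cons b' δ) : SV (k+2)) i.succ.succ) = δ := by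
    funext i; simp [Fin.cons_succ]
  simp only [pre, LinearMap.coe_mk, AddHom.coe_mk, h1, h2, h3]

lemma cons_decomp {k : ℕ} (ε : SV (k+2)) :
    ∃ a b δ, ε = Fin.cons a (Fin.cons b δ) := by
  refine ⟨ε 0, ε 1, fun i => ε i.succ.succ, ?_⟩
  funext i
  refine Fin.cases ?_ (fun j => ?_) i
  · simp
  · refine Fin.cases ?_ (fun j' => ?_) j
    · rw [Fin.cons_succ, Fin.cons_zero, Fin.succ_zero_eq_one]
    · rw [Fin.cons_succ, Fin.cons_succ]

theorem stmt6 (n k : ℕ) (hn : 1 ≤ n) (hk : k = 2 * n - 1)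
    (x : CF (k + 2)) (hx : proj k x ∈ LinearMap.ker (bdry k)) :
    ∃! p : CF k × CF k × CF k × CF k,
      bdry k p.2.2.2 = 0 ∧
      x = pre k true true p.1 + pre k false false p.1
        + pre k false true p.2.1 + pre k true false p.2.1
        + pre k true true p.2.2.1 + pre k false true p.2.2.1
        + pre k true true p.2.2.2 := by
  classical
  set X : Bool → Bool → CF k := fun a b δ => x (Fin.cons a (Fin.cons b δ)) with hX
  have hproj : proj k x = X true true + X true false + (X false true + X false false) := by
    funext δ
    show ∑ a : Bool, ∑ b : Bool, x (Fin.cons a (Fin.cons b δ)) = _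
    simp [Fintype.sum_bool, hX]
    try ring
  refine ⟨(X false false, X true false, X false true + X true false,
      X true true + X false false + (X false true + X true false)), ⟨?_, ?_⟩, ?_⟩
  · have : X true true + X false false + (X false true + X true false) = proj k x := by
      rw [hproj]; ring
    rw [this]
    exact hx
  · funext ε
    obtain ⟨a, b, δ, rfl⟩ := cons_decomp ε
    simp only [Pi.add_apply, pre_apply]
    cases a <;> cases b <;> simp only [Pi.add_apply] <;> simp
    all_goals try ring_nf
    all_goals simp [hX, show (2 : ZMod 2) = 0 by decide]
  · rintro ⟨u, v, w, t⟩ ⟨-, heq⟩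
    have h : ∀ a b δ, X a b δ =
        (if a = true ∧ b = true then u δ else 0) + (if a = false ∧ b = false then u δ else 0)
        + (if a = false ∧ b = true then v δ else 0) + (if a = true ∧ b = false then v δ else 0)
        + (if a = true ∧ b = true then w δ else 0) + (if a = false ∧ b = true then w δ else 0)
        + (if a = true ∧ b = true then t δ else 0) := by
      intro a b δ
      have := congrFun heq (Fin.cons a (Fin.cons b δ))
      simpa only [Pi.add_apply, pre_apply] using this
    have huu : u = X false false := by funext δ; have := h false false δ; simp at this; simp [this]
    have hvv : v = X true false := by funext δ; have := h true false δ; simp at this; simp [this]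
    have hww : w = X false true + X true false := by
      funext δ; have h1 := h false true δ; simp at h1
      simp only [Pi.add_apply, h1, hvv, Pi.add_apply]
      ring_nf
      simp [show (2 : ZMod 2) = 0 by decide]
    have htt : t = X true true + X false false + (X false true + X true false) := by
      funext δ; have h1 := h true true δ; simp at h1
      have hw := congrFun hww δ
      have hu := congrFun huu δ
      simp only [Pi.add_apply] at hw ⊢
      rw [h1, hu, hw]
      ring_nf
      simp [show (2 : ZMod 2) = 0 by decide]
    simp [huu, hvv, hww, htt]
end

section
/- Let k be odd, CF = CF(k) the free Z/2 vector space on {-1,1}^k with boundary operator ∂ (sum of single flips plus total flip, ∂^2 = 0) and η the total sign flip. Define α: CF ⊕ CF ⊕ ker ∂ ⊕ ker ∂ → im ∂ ⊕ ker ∂ by α(u,v,w,t) = (∂η u + ∂v, ∂η u + w + t + η w). Then α is surjective, and ker α = {(u,v,w,t) : ∂v = w + t + η w, ∂u = w + η t + η w, ∂w = 0}. -/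
open Finset

lemma eta_eta {k : ℕ} (x : CF k) : eta k (eta k x) = x := by
  have h : ∀ ε : SV k, flipAll (flipAll ε) = ε := by
    intro ε; funext j; simp [flipAll]
  funext ε; show x (flipAll (flipAll ε)) = x ε; rw [h]

lemma bdry_eta {k : ℕ} (x : CF k) : bdry k (eta k x) = eta k (bdry k x) := by
  funext ε
  show (∑ i, x (flipAll (sflip i ε))) + x (flipAll (flipAll ε))
      = (∑ i, x (sflip i (flipAll ε))) + x (flipAll (flipAll ε))
  simp [flipAll_sflip]

lemma add_self' {k : ℕ} (x : CF k) : x + x = 0 := by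
  funext ε
  show x ε + x ε = 0
  have : (2 : ZMod 2) = 0 := rfl
  rw [← two_mul, this, zero_mul]

lemma cancel' {k : ℕ} {a b : CF k} (h : a + b = 0) : a = b := by
  have h2 : a + (b + b) = b := by rw [← add_assoc, h, zero_add]
  rwa [add_self' b, add_zero] at h2

theorem stmt7 (k : ℕ) (hk : Odd k) :
    (∀ y₁ ∈ LinearMap.range (bdry k), ∀ y₂ ∈ LinearMap.ker (bdry k),
      ∃ u v w t : CF k, bdry k w = 0 ∧ bdry k t = 0 ∧
        bdry k (eta k u) + bdry k v = y₁ ∧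
        bdry k (eta k u) + w + t + eta k w = y₂) ∧
    (∀ u v w t : CF k, bdry k w = 0 → bdry k t = 0 →
      ((bdry k (eta k u) + bdry k v = 0 ∧
        bdry k (eta k u) + w + t + eta k w = 0) ↔
       (bdry k v = w + t + eta k w ∧
        bdry k u = w + eta k t + eta k w ∧
        bdry k w = 0))) := by
  constructor
  · rintro y₁ ⟨v, rfl⟩ y₂ hy₂
    rw [LinearMap.mem_ker] at hy₂
    refine ⟨0, v, y₂, eta k y₂, hy₂, ?_, by simp, ?_⟩
    · rw [bdry_eta, hy₂]; rfl
    · simp only [map_zero, zero_add]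
      rw [add_assoc, add_self' (eta k y₂), add_zero]
  · intro u v w t hw ht
    constructor
    · rintro ⟨h1, h2⟩
      have e1 : bdry k (eta k u) = bdry k v := cancel' h1
      have h2' : bdry k (eta k u) + (w + t + eta k w) = 0 := by
        rw [← h2]; abel
      have e2 : bdry k (eta k u) = w + t + eta k w := cancel' h2'
      refine ⟨e1 ▸ e2, ?_, hw⟩
      have : bdry k u = eta k (bdry k (eta k u)) := by
        rw [← bdry_eta, eta_eta]
      rw [this, e2, map_add, map_add, eta_eta]
      abel
    · rintro ⟨h1, h2, -⟩
      have e2 : bdry k (eta k u) = w + t + eta k w := by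
        rw [bdry_eta, h2, map_add, map_add, eta_eta, eta_eta]
        abel
      constructor
      · rw [e2, h1, add_self']
      · rw [e2]
        have : w + t + eta k w + w + t + eta k w
            = (w + t + eta k w) + (w + t + eta k w) := by abel
        rw [this, add_self']
end
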